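/- There is no vector v = (v₁,v₂,v₃) ∈ ℤ³ satisfying all of: Q(v,v) = −3; (−AB)v = v; and (−A)v = v or (−A)v = −v. Here A is the linear map (v₁,v₂,v₃) ↦ (v₂,v₁,v₃), B = diag(1,1,−1), so (−AB)(v₁,v₂,v₃) = (−v₂,−v₁,v₃) and (−A)(v₁,v₂,v₃) = (−v₂,−v₁,−v₃). -/
import Mathlib


open Matrix

/-- The symmetric bilinear form with Gram matrix `[[0,1,0],[1,0,0],[0,0,−1]]` on `ℤ³`
(coordinates with respect to the basis `(S₁, S₂, Σ)`). -/
def QS (x y : Fin 3 → ℤ) : ℤ := x 0 * y 1 + x 1 * y 0 - x 2 * y 2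

/-- The matrix `A` swapping the first two coordinates. -/
def Amat : Matrix (Fin 3) (Fin 3) ℤ := Matrix.of ![![0, 1, 0], ![1, 0, 0], ![0, 0, 1]]

/-- The matrix `B = diag(1,1,−1)`. -/
def Bmat : Matrix (Fin 3) (Fin 3) ℤ := Matrix.diagonal ![1, 1, -1]

/-- There is no `v ∈ ℤ³` with `Q(v,v) = −3`, `(−AB)v = v`, and `(−A)v = ±v`. -/
theorem no_vector_square_neg_three :
    ¬ ∃ v : Fin 3 → ℤ, QS v v = -3 ∧ (-(Amat * Bmat)).mulVec v = v ∧
      ((-Amat).mulVec v = v ∨ (-Amat).mulVec v = -v) := by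
  rintro ⟨v, hQ, h1, h2⟩
  have e0 := congrFun h1 0
  have e1 := congrFun h1 1
  simp [Amat, Bmat, mulVec, dotProduct, Fin.sum_univ_three, Matrix.mul_apply,
    Matrix.diagonal, Matrix.vecHead, Matrix.vecTail] at e0 e1
  unfold QS at hQ
  rcases h2 with h | h
  · have f2 := congrFun h 2
    simp [Amat, mulVec, dotProduct, Fin.sum_univ_three] at f2
    have hz : v 2 = 0 := by omega
    have hv0 : v 0 = -v 1 := by omega
    have h3 : 2 * (v 1 * v 1) = 3 := by rw [hv0, hz] at hQ; ring_nf at hQ ⊢; omega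
    have hb1 : v 1 ≤ 1 := by nlinarith
    have hb2 : -1 ≤ v 1 := by nlinarith
    set z := v 1 with hzz
    interval_cases z <;> omega
  · have f0 := congrFun h 0
    simp [Amat, mulVec, dotProduct, Fin.sum_univ_three] at f0
    have h0 : v 0 = 0 := by omega
    have h1' : v 1 = 0 := by omega
    have h3 : v 2 * v 2 = 3 := by nlinarith
    have hb1 : v 2 ≤ 2 := by nlinarith
    have hb2 : -2 ≤ v 2 := by nlinarith
    set z := v 2 with hzz
    interval_cases z <;> omega
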